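/- arXiv:2504.06750 — 5 statements merged into one kernel-verified Lean document; each statement's English description precedes it below -/
import Mathlib

section
/- Let n ∈ ℕ, let c : (Fin n → ℝ) → ℝ be a cost function, let U be a nonempty finite set of scenarios, and for each u ∈ U let x_u be a minimizer of c over the feasible set X u ⊆ (Fin n → ℝ). If for some u₀ ∈ U the single-scenario optimum x_{u₀} is robust, i.e., x_{u₀} ∈ ⋂_{u ∈ U} X u, then c (x_{u₀}) = max over u ∈ U of c (x_u). In words: only a single-scenario optimal solution of maximal cost can be robust. -/
theorem robust_single_scenario_opt_has_max_cost_general {n : ℕ} (c : (Fin n → ℝ) → ℝ)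
    {U : Type*} [Fintype U] [Nonempty U] (X : U → Set (Fin n → ℝ))
    (x : U → (Fin n → ℝ))
    (hx_opt : ∀ u : U, ∀ z ∈ X u, c (x u) ≤ c z)
    (u₀ : U) (hrobust : x u₀ ∈ ⋂ u : U, X u) :
    c (x u₀) = Finset.univ.sup' Finset.univ_nonempty (fun u : U => c (x u)) := by
  have hdominates : ∀ u, c (x u) ≤ c (x u₀) := fun u ↦ hx_opt u _ (Set.mem_iInter.mp hrobust u)
  exact le_antisymm (Finset.le_sup' (fun u ↦ c (x u)) (Finset.mem_univ u₀))
    (Finset.sup'_le _ _ fun u _ ↦ hdominates u)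

/-- Only a single-scenario optimal solution of maximal cost can be robust. -/
theorem robust_single_scenario_opt_has_max_cost {n : ℕ} (c : (Fin n → ℝ) → ℝ)
    {U : Type*} [Fintype U] [Nonempty U] (X : U → Set (Fin n → ℝ))
    (x : U → (Fin n → ℝ))
    (hx_mem : ∀ u : U, x u ∈ X u)
    (hx_opt : ∀ u : U, ∀ z ∈ X u, c (x u) ≤ c z)
    (u₀ : U) (hrobust : x u₀ ∈ ⋂ u : U, X u) :
    c (x u₀) = Finset.univ.sup' Finset.univ_nonempty (fun u : U => c (x u)) :=
  robust_single_scenario_opt_has_max_cost_general c X x hx_opt u₀ hrobust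
end

section
/- Validity of the yearly energy balance cut (MOD 3A): in the single-node energy system model, if a capacity vector x : Fin P → ℝ admits a gap-free operation schedule, then the total renewable energy supply over the year is at least the total demand: ∑_{t ∈ Fin T} ∑_{p ∈ Fin P} a t p * x p ≥ ∑_{t ∈ Fin T} d t. -/
/-!
Sum the electricity balance over the year. Cyclicity makes the net discharge of the battery,
`sEl 0 - sEl T`, nonpositive. Summing the hydrogen dynamics, cyclicity gives
`αm ∑ δm ≤ αp ∑ δp`, and since `αp ≤ αm` and `∑ δm ≥ 0` the conversion returns at most the
electricity it absorbs: `∑ δm ≤ ∑ δp`. With no load shedding, only the renewable supply is left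
to cover the demand.
-/

open Finset

/-- An operation schedule for the single-node energy system model:
`a` production coefficients, `d` demands, `αp`/`αm` conversion efficiencies,
`x` capacities, `sEl`/`sH2` storage levels, `δp`/`δm` conversion in/out-flows,
`Δ` load shedding. -/
def IsSchedule (T P : ℕ) (a : Fin T → Fin P → ℝ) (d : Fin T → ℝ) (αp αm : ℝ)
    (x : Fin P → ℝ) (sEl sH2 : Fin (T + 1) → ℝ) (δp δm Δ : Fin T → ℝ) : Prop :=
  (∀ t, 0 ≤ sEl t) ∧ (∀ t, 0 ≤ sH2 t) ∧
  (∀ t, 0 ≤ δp t) ∧ (∀ t, 0 ≤ δm t) ∧ (∀ t, 0 ≤ Δ t) ∧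
  (∀ t : Fin T, (∑ p, a t p * x p) + δm t - δp t
      + sEl t.castSucc - sEl t.succ + Δ t ≥ d t) ∧
  (∀ t : Fin T, sH2 t.succ = sH2 t.castSucc + αp * δp t - αm * δm t) ∧
  sEl (Fin.last T) ≥ sEl 0 ∧ sH2 (Fin.last T) ≥ sH2 0

theorem Fin.sum_succ_sub_castSucc {M : Type*} [AddCommGroup M] {n : ℕ} (f : Fin (n + 1) → M) :
    ∑ i : Fin n, (f i.succ - f i.castSucc) = f (Fin.last n) - f 0 := by
  rw [sum_sub_distrib, sub_eq_sub_iff_add_eq_add, add_comm, ← Fin.sum_univ_succ,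
    Fin.sum_univ_castSucc, add_comm]

theorem sum_le_sum_of_cyclic_storage {n : ℕ} (s : Fin (n + 1) → ℝ) (g d : Fin n → ℝ)
    (hbal : ∀ i, d i ≤ g i + s i.castSucc - s i.succ) (hcyc : s 0 ≤ s (Fin.last n)) :
    ∑ i, d i ≤ ∑ i, g i := by
  have htele := Fin.sum_succ_sub_castSucc s
  calc ∑ i, d i ≤ ∑ i, (g i - (s i.succ - s i.castSucc)) :=
        sum_le_sum fun i _ => by linarith [hbal i]
    _ = ∑ i, g i - (s (Fin.last n) - s 0) := by rw [sum_sub_distrib, htele]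
    _ ≤ ∑ i, g i := by linarith

theorem sum_outflow_le_sum_inflow_of_cyclic_storage {n : ℕ} {αp αm : ℝ} (hαp : 0 < αp)
    (hα : αp ≤ αm) (s : Fin (n + 1) → ℝ) (δp δm : Fin n → ℝ) (hδm : ∀ i, 0 ≤ δm i)
    (hdyn : ∀ i, s i.succ = s i.castSucc + αp * δp i - αm * δm i)
    (hcyc : s 0 ≤ s (Fin.last n)) :
    ∑ i, δm i ≤ ∑ i, δp i := by
  have hnet : αp * ∑ i, δp i - αm * ∑ i, δm i = s (Fin.last n) - s 0 := by
    rw [← Fin.sum_succ_sub_castSucc, mul_sum, mul_sum, ← sum_sub_distrib]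
    exact sum_congr rfl fun i _ => by rw [hdyn i]; ring
  have hδm_sum : 0 ≤ ∑ i, δm i := sum_nonneg fun i _ => hδm i
  refine le_of_mul_le_mul_left ?_ hαp
  calc αp * ∑ i, δm i ≤ αm * ∑ i, δm i := mul_le_mul_of_nonneg_right hα hδm_sum
    _ ≤ αp * ∑ i, δp i := by linarith

theorem yearly_balance_cut_valid_general {T P : ℕ} (a : Fin T → Fin P → ℝ) (d : Fin T → ℝ)
    (αp αm : ℝ) (hαp : 0 < αp) (hα : αp ≤ αm)
    (x : Fin P → ℝ) (sEl sH2 : Fin (T + 1) → ℝ) (δp δm Δ : Fin T → ℝ)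
    (hsched : IsSchedule T P a d αp αm x sEl sH2 δp δm Δ)
    (hgapfree : ∀ t, Δ t = 0) :
    ∑ t : Fin T, ∑ p : Fin P, a t p * x p ≥ ∑ t : Fin T, d t := by
  obtain ⟨-, -, -, hδm, -, hbal, hH2, hcycEl, hcycH2⟩ := hsched
  have hdemand : ∑ t, d t ≤ ∑ t, ((∑ p, a t p * x p) + (δm t - δp t)) :=
    sum_le_sum_of_cyclic_storage sEl _ d
      (fun t => by linarith [hbal t, hgapfree t]) hcycEl
  have hconv : ∑ t, δm t ≤ ∑ t, δp t :=
    sum_outflow_le_sum_inflow_of_cyclic_storage hαp hα sH2 δp δm hδm hH2 hcycH2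
  rw [sum_add_distrib, sum_sub_distrib] at hdemand
  linarith

/-- Validity of the yearly energy balance cut (MOD 3A): a gap-free
schedule implies total renewable supply over the year covers total demand. -/
theorem yearly_balance_cut_valid {T P : ℕ} (a : Fin T → Fin P → ℝ) (d : Fin T → ℝ)
    (αp αm : ℝ) (ha : ∀ t p, 0 ≤ a t p) (hd : ∀ t, 0 ≤ d t)
    (hαp : 0 < αp) (hα : αp ≤ αm)
    (x : Fin P → ℝ) (sEl sH2 : Fin (T + 1) → ℝ) (δp δm Δ : Fin T → ℝ)
    (hsched : IsSchedule T P a d αp αm x sEl sH2 δp δm Δ)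
    (hgapfree : ∀ t, Δ t = 0) :
    ∑ t : Fin T, ∑ p : Fin P, a t p * x p ≥ ∑ t : Fin T, d t :=
  yearly_balance_cut_valid_general a d αp αm hαp hα x sEl sH2 δp δm Δ hsched hgapfree
end

section
/- Validity of the cumulative hydrogen availability cut (core of MOD 3 / Combine): in the single-node energy system model, for any operation schedule and every time index t₀ ≤ T, the hydrogen consumed up to time t₀ is bounded by the initial storage plus the hydrogen produced up to time t₀: α⁻ * ∑_{t < t₀} δ⁻ t ≤ sH2 0 + α⁺ * ∑_{t < t₀} δ⁺ t. (This follows from sH2 t₀ ≥ 0 and telescoping the hydrogen dynamics.) -/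
lemma key_aux {T P : ℕ} (a : Fin T → Fin P → ℝ) (d : Fin T → ℝ)
    (αp αm : ℝ)
    (x : Fin P → ℝ) (sEl sH2 : Fin (T + 1) → ℝ) (δp δm Δ : Fin T → ℝ)
    (hdyn : ∀ t : Fin T, sH2 t.succ = sH2 t.castSucc + αp * δp t - αm * δm t)
    (n : ℕ) (hn : n ≤ T) :
    sH2 ⟨n, Nat.lt_succ_of_le hn⟩ =
      sH2 0 + αp * ∑ t ∈ Finset.univ.filter (fun t : Fin T => (t : ℕ) < n), δp t
        - αm * ∑ t ∈ Finset.univ.filter (fun t : Fin T => (t : ℕ) < n), δm t := by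
  induction n with
  | zero =>
      simp [Finset.filter_eq_empty_iff]
  | succ n ih =>
      have hn' : n ≤ T := Nat.le_of_succ_le hn
      have hnT : n < T := hn
      have hfilter : ∀ f : Fin T → ℝ,
          ∑ t ∈ Finset.univ.filter (fun t : Fin T => (t : ℕ) < n + 1), f t
            = (∑ t ∈ Finset.univ.filter (fun t : Fin T => (t : ℕ) < n), f t)
              + f ⟨n, hnT⟩ := by
        intro f
        have : Finset.univ.filter (fun t : Fin T => (t : ℕ) < n + 1)
            = insert (⟨n, hnT⟩ : Fin T)
                (Finset.univ.filter (fun t : Fin T => (t : ℕ) < n)) := by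
          ext t
          simp [Nat.lt_succ_iff_lt_or_eq, Fin.ext_iff, or_comm]
          constructor <;> intro h <;> omega
        rw [this, Finset.sum_insert (by simp)]
        ring
      have hd := hdyn ⟨n, hnT⟩
      have hsucc : (Fin.succ (⟨n, hnT⟩ : Fin T)) = ⟨n + 1, Nat.lt_succ_of_le hn⟩ := rfl
      have hcast : (Fin.castSucc (⟨n, hnT⟩ : Fin T)) = ⟨n, Nat.lt_succ_of_le hn'⟩ := rfl
      rw [hsucc, hcast] at hd
      rw [hd, ih hn', hfilter, hfilter]
      ring

/-- Validity of the cumulative hydrogen availability cut (core of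
MOD 3 / Combine): hydrogen consumed up to any time `t₀` is bounded by initial
storage plus hydrogen produced up to `t₀`. -/
theorem cumulative_hydrogen_cut_valid {T P : ℕ} (a : Fin T → Fin P → ℝ) (d : Fin T → ℝ)
    (αp αm : ℝ) (ha : ∀ t p, 0 ≤ a t p) (hd : ∀ t, 0 ≤ d t)
    (hαp : 0 < αp) (hα : αp ≤ αm)
    (x : Fin P → ℝ) (sEl sH2 : Fin (T + 1) → ℝ) (δp δm Δ : Fin T → ℝ)
    (hsched : IsSchedule T P a d αp αm x sEl sH2 δp δm Δ)
    (t₀ : ℕ) (ht₀ : t₀ ≤ T) :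
    αm * ∑ t ∈ Finset.univ.filter (fun t : Fin T => (t : ℕ) < t₀), δm t ≤
      sH2 0 + αp * ∑ t ∈ Finset.univ.filter (fun t : Fin T => (t : ℕ) < t₀), δp t := by
  obtain ⟨_, hsH2, _, _, _, _, hdyn, _, _⟩ := hsched
  have := key_aux a d αp αm x sEl sH2 δp δm Δ hdyn t₀ ht₀
  have h0 := hsH2 ⟨t₀, Nat.lt_succ_of_le ht₀⟩
  linarith
end

section
/- Critical time periods force supply gaps: in the single-node energy system model, suppose additionally that the conversion output is capped, δ⁻ t ≤ C for all t, and the electricity storage is capped, sEl t ≤ S for all t, with C, S ≥ 0. Let t₀ ≤ t₁ ≤ T be time indices defining the consecutive period Ico t₀ t₁. If the maximal possible supply over the period is strictly less than its demand, i.e., ∑_{t ∈ Ico t₀ t₁} ∑_{p} a t p * x p + (t₁ − t₀) * C + S < ∑_{t ∈ Ico t₀ t₁} d t, then every operation schedule for x incurs a strictly positive supply gap over the period: ∑_{t ∈ Ico t₀ t₁} Δ t > 0. -/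
open Finset

theorem Fin.sum_filter_val_mem_Ico {M : Type*} [AddCommMonoid M] {T t₀ t₁ : ℕ}
    (h₁ : t₁ ≤ T) (g : ℕ → M) :
    ∑ t ∈ univ.filter (fun t : Fin T => (t : ℕ) ∈ Set.Ico t₀ t₁), g t
      = ∑ n ∈ Ico t₀ t₁, g n := by
  have hIco : Ico t₀ t₁ = (range T).filter (· ∈ Set.Ico t₀ t₁) := by
    ext n
    simp only [mem_filter, mem_range, Set.mem_Ico, mem_Ico]
    omega
  rw [sum_filter, hIco, sum_filter,
    Fin.sum_univ_eq_sum_range (fun n => if n ∈ Set.Ico t₀ t₁ then g n else 0)]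

theorem sum_castSucc_sub_succ_le {T t₀ t₁ : ℕ} (h₁ : t₁ ≤ T) {s : Fin (T + 1) → ℝ} {S : ℝ}
    (hs₀ : ∀ t, 0 ≤ s t) (hsS : ∀ t, s t ≤ S) :
    ∑ t ∈ univ.filter (fun t : Fin T => (t : ℕ) ∈ Set.Ico t₀ t₁), (s t.castSucc - s t.succ)
      ≤ S := by
  -- `Fin.ofNat` reduces modulo `T + 1`, harmless since only indices `≤ T` occur.
  set g : ℕ → ℝ := fun n => s (Fin.ofNat (T + 1) n)
  have hcast : ∀ t : Fin T, s t.castSucc - s t.succ = g t - g (t + 1) := by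
    intro t
    congr 2 <;> ext <;> simp [Nat.mod_eq_of_lt, t.isLt]
  rw [sum_congr rfl fun t _ => hcast t,
    Fin.sum_filter_val_mem_Ico h₁ fun n => g n - g (n + 1)]
  rcases le_or_gt t₀ t₁ with h₀₁ | h₁₀
  · calc ∑ n ∈ Ico t₀ t₁, (g n - g (n + 1)) = g t₀ - g t₁ := by
          rw [← neg_sub, ← sum_Ico_sub g h₀₁, ← sum_neg_distrib]
          simp only [neg_sub]
      _ ≤ S - 0 := sub_le_sub (hsS _) (hs₀ _)
      _ = S := sub_zero S
  · rw [Ico_eq_empty_of_le h₁₀.le, sum_empty]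
    exact (hs₀ 0).trans (hsS 0)

theorem IsSchedule.sum_demand_le {T P : ℕ} {a : Fin T → Fin P → ℝ} {d : Fin T → ℝ}
    {αp αm : ℝ} {x : Fin P → ℝ} {sEl sH2 : Fin (T + 1) → ℝ} {δp δm Δ : Fin T → ℝ}
    (h : IsSchedule T P a d αp αm x sEl sH2 δp δm Δ) (I : Finset (Fin T)) :
    ∑ t ∈ I, d t ≤ ∑ t ∈ I, ∑ p, a t p * x p + ∑ t ∈ I, δm t
      + ∑ t ∈ I, (sEl t.castSucc - sEl t.succ) + ∑ t ∈ I, Δ t := by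
  obtain ⟨-, -, hδp, -, -, hbal, -⟩ := h
  have hbalance := sum_le_sum fun t (_ : t ∈ I) => hbal t
  have hcharge : 0 ≤ ∑ t ∈ I, δp t := sum_nonneg fun t _ => hδp t
  simp only [sum_add_distrib, sum_sub_distrib] at hbalance ⊢
  linarith

theorem critical_period_forces_supply_gap_general {T P : ℕ} (a : Fin T → Fin P → ℝ)
    (d : Fin T → ℝ) (αp αm : ℝ)
    (x : Fin P → ℝ) (sEl sH2 : Fin (T + 1) → ℝ) (δp δm Δ : Fin T → ℝ)
    (hsched : IsSchedule T P a d αp αm x sEl sH2 δp δm Δ)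
    (C S : ℝ)
    (hδmCap : ∀ t, δm t ≤ C) (hsElCap : ∀ t, sEl t ≤ S)
    (t₀ t₁ : ℕ) (h₁ : t₁ ≤ T)
    (hcrit : ∑ t ∈ Finset.univ.filter (fun t : Fin T => (t : ℕ) ∈ Set.Ico t₀ t₁),
          ∑ p : Fin P, a t p * x p
        + ((t₁ - t₀ : ℕ) : ℝ) * C + S <
      ∑ t ∈ Finset.univ.filter (fun t : Fin T => (t : ℕ) ∈ Set.Ico t₀ t₁), d t) :
    ∑ t ∈ Finset.univ.filter (fun t : Fin T => (t : ℕ) ∈ Set.Ico t₀ t₁), Δ t > 0 := by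
  set I := Finset.univ.filter (fun t : Fin T => (t : ℕ) ∈ Set.Ico t₀ t₁)
  have hcard : #I = t₁ - t₀ := by
    rw [card_eq_sum_ones, Fin.sum_filter_val_mem_Ico h₁ fun _ => 1, ← card_eq_sum_ones,
      Nat.card_Ico]
  have hconv : ∑ t ∈ I, δm t ≤ ((t₁ - t₀ : ℕ) : ℝ) * C := by
    simpa [hcard] using sum_le_card_nsmul I δm C fun t _ => hδmCap t
  have hstorage := sum_castSucc_sub_succ_le h₁ hsched.1 hsElCap (t₀ := t₀)
  linarith [hsched.sum_demand_le I]

/-- Critical time periods force supply gaps: if, with conversion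
output capped by `C` and electricity storage capped by `S`, the maximal possible
supply over a consecutive period falls strictly short of its demand, then any
operation schedule has strictly positive load shedding over the period. -/
theorem critical_period_forces_supply_gap {T P : ℕ} (a : Fin T → Fin P → ℝ)
    (d : Fin T → ℝ) (αp αm : ℝ) (ha : ∀ t p, 0 ≤ a t p) (hd : ∀ t, 0 ≤ d t)
    (hαp : 0 < αp) (hα : αp ≤ αm)
    (x : Fin P → ℝ) (sEl sH2 : Fin (T + 1) → ℝ) (δp δm Δ : Fin T → ℝ)
    (hsched : IsSchedule T P a d αp αm x sEl sH2 δp δm Δ)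
    (C S : ℝ) (hC : 0 ≤ C) (hS : 0 ≤ S)
    (hδmCap : ∀ t, δm t ≤ C) (hsElCap : ∀ t, sEl t ≤ S)
    (t₀ t₁ : ℕ) (h₀₁ : t₀ ≤ t₁) (h₁ : t₁ ≤ T)
    (hcrit : ∑ t ∈ Finset.univ.filter (fun t : Fin T => (t : ℕ) ∈ Set.Ico t₀ t₁),
          ∑ p : Fin P, a t p * x p
        + ((t₁ - t₀ : ℕ) : ℝ) * C + S <
      ∑ t ∈ Finset.univ.filter (fun t : Fin T => (t : ℕ) ∈ Set.Ico t₀ t₁), d t) :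
    ∑ t ∈ Finset.univ.filter (fun t : Fin T => (t : ℕ) ∈ Set.Ico t₀ t₁), Δ t > 0 :=
  critical_period_forces_supply_gap_general a d αp αm x sEl sH2 δp δm Δ hsched C S hδmCap hsElCap t₀
    t₁ h₁ hcrit
end

section
/- Zero slack value certifies robustness when the operational set is compact: let A : (Fin n → ℝ) →ₗ[ℝ] (Fin m → ℝ) and B : (Fin k → ℝ) →ₗ[ℝ] (Fin m → ℝ) be linear maps, b : Fin m → ℝ, x : Fin n → ℝ, and let K ⊆ (Fin k → ℝ) be a nonempty compact set. If the infimum of ∑_i δ i over the slack-feasible set {(y, δ) | y ∈ K, δ ≥ 0 componentwise, B y + δ ≥ b − A x componentwise} equals 0, then there exists y ∈ K with (B y) i ≥ b i − (A x) i for all i, i.e., the energy system with capacities x is robust for the given data. -/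
/-! The total shortfall `∑ᵢ (cᵢ - (B y)ᵢ)⁺` is continuous in `y`, so it attains its minimum on the
compact set `K` at some `y₀`. Each feasible `(y, δ)` has slack sum at least the shortfall of `y`, so
the shortfall at `y₀` is at most the optimal slack value `0`; a vanishing shortfall means that `y₀`
violates no constraint. -/

open Finset

variable {ι : Type*} [Fintype ι]

/-- The least total slack `∑ᵢ δᵢ` with `δ ≥ 0` and `v + δ ≥ c`. -/
noncomputable def shortfall (c v : ι → ℝ) : ℝ := ∑ i, (c i - v i)⁺

lemma shortfall_nonneg (c v : ι → ℝ) : 0 ≤ shortfall c v :=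
  sum_nonneg fun _ _ => posPart_nonneg _

lemma shortfall_le_sum {c v δ : ι → ℝ} (hδ : ∀ i, 0 ≤ δ i) (h : ∀ i, v i + δ i ≥ c i) :
    shortfall c v ≤ ∑ i, δ i :=
  sum_le_sum fun i _ => sup_le (by linarith [h i]) (hδ i)

lemma shortfall_eq_zero_iff {c v : ι → ℝ} : shortfall c v = 0 ↔ ∀ i, v i ≥ c i := by
  simp only [shortfall, sum_eq_zero_iff_of_nonneg fun i _ => posPart_nonneg (c i - v i),
    mem_univ, true_implies, posPart_eq_zero, sub_nonpos, ge_iff_le]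

lemma continuous_shortfall (c : ι → ℝ) : Continuous (shortfall c) :=
  continuous_finsetSum _ fun i _ =>
    (continuous_const.sub (continuous_apply i)).max continuous_const

lemma shortfall_le_sInf_slack {E : Type*} {F : E → ι → ℝ} {c : ι → ℝ} {K : Set E} {y₀ : E}
    (hy₀ : y₀ ∈ K) (hmin : IsMinOn (fun y => shortfall c (F y)) K y₀) :
    shortfall c (F y₀) ≤ sInf ((fun yδ : E × (ι → ℝ) => ∑ i, yδ.2 i) ''
      {yδ | yδ.1 ∈ K ∧ (∀ i, 0 ≤ yδ.2 i) ∧ ∀ i, (F yδ.1) i + yδ.2 i ≥ c i}) := by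
  refine le_csInf ⟨_, (y₀, fun i => (c i - F y₀ i)⁺),
    ⟨hy₀, fun i => posPart_nonneg _, fun i => by linarith [le_posPart (c i - F y₀ i)]⟩, rfl⟩ ?_
  rintro _ ⟨⟨y, δ⟩, ⟨hy, hδ, hfeas⟩, rfl⟩
  exact (hmin hy).trans (shortfall_le_sum hδ hfeas)

/-- Zero slack optimal value certifies robustness when the set of
admissible operational decisions is compact. -/
theorem robust_of_slack_value_zero {n m k : ℕ}
    (A : (Fin n → ℝ) →ₗ[ℝ] (Fin m → ℝ)) (B : (Fin k → ℝ) →ₗ[ℝ] (Fin m → ℝ))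
    (b : Fin m → ℝ) (x : Fin n → ℝ) (K : Set (Fin k → ℝ))
    (hKne : K.Nonempty) (hKcomp : IsCompact K)
    (hval : sInf ((fun yδ : (Fin k → ℝ) × (Fin m → ℝ) => ∑ i, yδ.2 i) ''
      {yδ : (Fin k → ℝ) × (Fin m → ℝ) | yδ.1 ∈ K ∧ (∀ i, 0 ≤ yδ.2 i) ∧
        ∀ i, (B yδ.1) i + yδ.2 i ≥ b i - (A x) i}) = 0) :
    ∃ y ∈ K, ∀ i, (B y) i ≥ b i - (A x) i := by
  set c : Fin m → ℝ := fun i => b i - A x i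
  obtain ⟨y₀, hy₀, hmin⟩ := hKcomp.exists_isMinOn hKne
    ((continuous_shortfall c).comp B.continuous_of_finiteDimensional).continuousOn
  have hle : shortfall c (B y₀) ≤ 0 := hval ▸ shortfall_le_sInf_slack hy₀ hmin
  exact ⟨y₀, hy₀, shortfall_eq_zero_iff.mp (hle.antisymm (shortfall_nonneg _ _))⟩
end
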